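/- Every finitely generated group G admits a proper affine isometric action on the affine Banach space δ_1 + ∂(ℓ¹(𝒢¹)), where 𝒢 is a Cayley graph of G, given by the cocycle g ↦ δ_1 − δ_g; the norm of the cocycle at g equals d(1,g). -/

import Mathlib

/-- The Cayley graph of a group for a finite generating set. -/
def cayley {G : Type*} [Group G] (S : Finset G) : SimpleGraph G where
  Adj x y := x ≠ y ∧ (x⁻¹ * y ∈ S ∨ y⁻¹ * x ∈ S)
  symm := by
    constructor
    intro x y h
    exact ⟨fun e => h.1 e.symm, h.2.symm⟩
  loopless := by constructor; intro x h; exact h.1 rfl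

/-- The boundary operator, sending the oriented edge `(x,y)` to `δ_y - δ_x`. -/
noncomputable def bndFull {G : Type*} (c : (G × G) →₀ ℝ) : G →₀ ℝ :=
  c.sum fun e a => Finsupp.single e.2 a - Finsupp.single e.1 a

/-!
The cocycle `g ↦ δ₁ - δ_g` is the boundary of the chain of a geodesic from `g` to `1`, so its
quotient norm is at most `d(1,g)`. Conversely, pairing a filling `c` of `δ₁ - δ_g` with the
function `d(1, ·)`, which changes by at most `1` along each edge, gives `d(1,g) ≤ ‖c‖₁`.
Left translation is an automorphism of the Cayley graph, so it preserves the quotient norm, and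
properness follows because balls of the Cayley graph of a finite generating set are finite.
-/

open Finsupp SimpleGraph

noncomputable def l1Norm {α : Type*} (c : α →₀ ℝ) : ℝ := c.sum fun _ a => |a|

section L1Norm

variable {α β : Type*}

lemma l1Norm_add_le (c d : α →₀ ℝ) : l1Norm (c + d) ≤ l1Norm c + l1Norm d := by
  classical
  have hsum : ∀ c' : α →₀ ℝ, c'.support ⊆ c.support ∪ d.support →
      l1Norm c' = ∑ x ∈ c.support ∪ d.support, |c' x| :=
    fun c' hc' => Finsupp.sum_of_support_subset c' hc' _ fun _ _ => abs_zero
  rw [hsum _ support_add, hsum c Finset.subset_union_left, hsum d Finset.subset_union_right,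
    ← Finset.sum_add_distrib]
  exact Finset.sum_le_sum fun x _ => abs_add_le (c x) (d x)

lemma l1Norm_single (x : α) (a : ℝ) : l1Norm (single x a) = |a| :=
  sum_single_index abs_zero

lemma l1Norm_mapDomain {f : α → β} (hf : Function.Injective f) (c : α →₀ ℝ) :
    l1Norm (mapDomain f c) = l1Norm c :=
  sum_mapDomain_index_inj hf

end L1Norm

section Boundary

variable {V W : Type*}

lemma bndFull_zero : bndFull (0 : (V × V) →₀ ℝ) = 0 :=
  sum_zero_index

lemma bndFull_single (e : V × V) (a : ℝ) :
    bndFull (single e a) = single e.2 a - single e.1 a :=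
  sum_single_index (by simp)

lemma bndFull_add (c d : (V × V) →₀ ℝ) : bndFull (c + d) = bndFull c + bndFull d :=
  sum_add_index' (fun _ => by simp) fun _ a b => by simp only [single_add]; abel

lemma bndFull_mapDomain (f : V → W) (c : (V × V) →₀ ℝ) :
    bndFull (mapDomain (Prod.map f f) c) = mapDomain f (bndFull c) := by
  induction c using Finsupp.induction_linear with
  | zero => simp [bndFull_zero]
  | add c d hc hd => rw [mapDomain_add, bndFull_add, bndFull_add, hc, hd, mapDomain_add]
  | single e a => simp [bndFull_single, mapDomain_single, mapDomain_sub]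

lemma abs_linearCombination_bndFull_le (φ : V → ℝ) (c : (V × V) →₀ ℝ)
    (hφ : ∀ e ∈ c.support, |φ e.2 - φ e.1| ≤ 1) :
    |linearCombination ℝ φ (bndFull c)| ≤ l1Norm c := by
  have hpair : linearCombination ℝ φ (bndFull c) = c.sum fun e a => a * (φ e.2 - φ e.1) := by
    simp [bndFull, map_finsuppSum, linearCombination_single, mul_sub]
  rw [hpair, Finsupp.sum, l1Norm, Finsupp.sum]
  refine (Finset.abs_sum_le_sum_abs _ _).trans (Finset.sum_le_sum fun e he => ?_)
  rw [abs_mul]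
  exact mul_le_of_le_one_right (abs_nonneg _) (hφ e he)

end Boundary

namespace SimpleGraph

variable {V W : Type*} {Gr : SimpleGraph V} {Gr' : SimpleGraph W}

noncomputable def Walk.toChain : ∀ {u v : V}, Gr.Walk u v → ((V × V) →₀ ℝ)
  | _, _, .nil => 0
  | u, _, .cons (v := w) _ p => single (u, w) 1 + p.toChain

lemma Walk.bndFull_toChain {u v : V} (p : Gr.Walk u v) :
    bndFull p.toChain = single v 1 - single u 1 := by
  induction p with
  | nil => simp [toChain, bndFull_zero]
  | cons _ p ih =>
    rw [toChain, bndFull_add, bndFull_single, ih]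
    abel

lemma Walk.l1Norm_toChain_le {u v : V} (p : Gr.Walk u v) : l1Norm p.toChain ≤ p.length := by
  induction p with
  | nil => simp [toChain, l1Norm]
  | cons _ p ih =>
    refine (l1Norm_add_le _ _).trans ?_
    rw [l1Norm_single, abs_one, length_cons, Nat.cast_succ]
    linarith

lemma Walk.adj_of_mem_support_toChain {u v : V} (p : Gr.Walk u v) :
    ∀ e ∈ p.toChain.support, Gr.Adj e.1 e.2 := by
  classical
  induction p with
  | nil => simp [toChain]
  | cons hadj p ih =>
    intro e he
    rcases Finset.mem_union.mp (support_add he) with he | he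
    · rw [Finset.mem_singleton.mp (support_single_subset he)]
      exact hadj
    · exact ih e he

lemma Adj.abs_dist_sub_dist_le_one {v w : V} (hadj : Gr.Adj v w) (u : V) :
    |(Gr.dist u w : ℝ) - Gr.dist u v| ≤ 1 := by
  have hw : Gr.dist u w ≤ Gr.dist u v + 1 := by
    rcases hadj.diff_dist_adj (u := u) with h | h | h <;> omega
  have hv : Gr.dist u v ≤ Gr.dist u w + 1 := by
    rcases hadj.diff_dist_adj (u := u) with h | h | h <;> omega
  rw [abs_sub_le_iff, sub_le_iff_le_add', sub_le_iff_le_add']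
  exact ⟨by exact_mod_cast hw, by exact_mod_cast hv⟩

/-- `sInf (Gr.fillingLengths f)` is the quotient norm of `f` under `bndFull`. -/
def fillingLengths (Gr : SimpleGraph V) (f : V →₀ ℝ) : Set ℝ :=
  {r | ∃ c : (V × V) →₀ ℝ, (∀ e ∈ c.support, Gr.Adj e.1 e.2) ∧ bndFull c = f ∧ r = l1Norm c}

lemma mapDomain_mem_fillingLengths (φ : Gr ↪g Gr') {f : V →₀ ℝ} {r : ℝ}
    (hr : r ∈ Gr.fillingLengths f) : r ∈ Gr'.fillingLengths (mapDomain φ f) := by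
  classical
  obtain ⟨c, hadj, rfl, rfl⟩ := hr
  have hinj : Function.Injective (Prod.map φ φ) := φ.injective.prodMap φ.injective
  refine ⟨mapDomain (Prod.map φ φ) c, fun e he => ?_, bndFull_mapDomain _ c,
    (l1Norm_mapDomain hinj c).symm⟩
  obtain ⟨e', he', rfl⟩ := Finset.mem_image.mp (mapDomain_support he)
  exact φ.map_adj_iff.mpr (hadj e' he')

lemma fillingLengths_mapDomain (φ : Gr ≃g Gr') (f : V →₀ ℝ) :
    Gr'.fillingLengths (mapDomain φ f) = Gr.fillingLengths f := by
  refine Set.Subset.antisymm (fun r hr => ?_) fun r => mapDomain_mem_fillingLengths φ.toEmbedding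
  have hid : (φ.symm.toEmbedding : W → V) ∘ φ = id := funext φ.symm_apply_apply
  have := mapDomain_mem_fillingLengths φ.symm.toEmbedding hr
  rwa [← mapDomain_comp, hid, mapDomain_id] at this

lemma dist_le_of_mem_fillingLengths {u v : V} {r : ℝ}
    (hr : r ∈ Gr.fillingLengths (single u 1 - single v 1)) : (Gr.dist u v : ℝ) ≤ r := by
  obtain ⟨c, hadj, hbnd, rfl⟩ := hr
  have h := abs_linearCombination_bndFull_le (fun x => (Gr.dist u x : ℝ)) c
    fun e he => (hadj e he).abs_dist_sub_dist_le_one u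
  simpa [hbnd, dist_self] using h

lemma Reachable.sInf_fillingLengths {u v : V} (h : Gr.Reachable u v) :
    sInf (Gr.fillingLengths (single u 1 - single v 1)) = Gr.dist u v := by
  obtain ⟨p, hp⟩ := h.symm.exists_walk_length_eq_dist
  have hmem : l1Norm p.toChain ∈ Gr.fillingLengths (single u 1 - single v 1) :=
    ⟨p.toChain, p.adj_of_mem_support_toChain, p.bndFull_toChain, rfl⟩
  have hle : l1Norm p.toChain ≤ Gr.dist u v := by
    simpa [hp, dist_comm] using p.l1Norm_toChain_le
  exact le_antisymm
    (csInf_le_of_le ⟨_, fun _ => dist_le_of_mem_fillingLengths⟩ hmem hle)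
    (le_csInf ⟨_, hmem⟩ fun _ => dist_le_of_mem_fillingLengths)

end SimpleGraph

section Cayley

open Pointwise

variable {G : Type*} [Group G] {S : Finset G}

lemma cayley_adj_mul_left (g : G) {x y : G} :
    (cayley S).Adj (g * x) (g * y) ↔ (cayley S).Adj x y := by
  have hxy : (g * x)⁻¹ * (g * y) = x⁻¹ * y := by group
  have hyx : (g * y)⁻¹ * (g * x) = y⁻¹ * x := by group
  change (_ ≠ _ ∧ _) ↔ (_ ≠ _ ∧ _)
  rw [hxy, hyx, Ne, mul_right_inj]

def cayleyMulLeft (g : G) : cayley S ≃g cayley S :=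
  ⟨Equiv.mulLeft g, cayley_adj_mul_left g⟩

@[simp]
lemma cayleyMulLeft_apply (g x : G) : cayleyMulLeft (S := S) g x = g * x := rfl

lemma cayley_reachable_one (hgen : Subgroup.closure (S : Set G) = ⊤) (g : G) :
    (cayley S).Reachable 1 g := by
  have hg : g ∈ Subgroup.closure (S : Set G) := hgen ▸ Subgroup.mem_top g
  induction hg using Subgroup.closure_induction with
  | mem s hs =>
    by_cases h : s = 1
    · rw [h]
    · exact Adj.reachable ⟨Ne.symm h, Or.inl (by simpa using hs)⟩
  | one => rfl
  | mul x y _ _ hx hy => exact hx.trans (by simpa using hy.map (cayleyMulLeft x).toHom)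
  | inv x _ hx => exact Reachable.symm (by simpa using hx.map (cayleyMulLeft x⁻¹).toHom)

lemma cayley_walk_mem_pow [DecidableEq G] {x y : G} (p : (cayley S).Walk x y) :
    x⁻¹ * y ∈ (S ∪ S⁻¹) ^ p.length := by
  induction p with
  | nil => simp
  | @cons u w v hadj p ih =>
    have hstep : u⁻¹ * w ∈ S ∪ S⁻¹ := by
      rcases hadj.2 with h | h
      · exact Finset.mem_union_left _ h
      · exact Finset.mem_union_right _ (by simpa using h)
    rw [Walk.length_cons, pow_succ']
    simpa [mul_assoc] using Finset.mul_mem_mul hstep ih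

lemma finite_setOf_cayley_dist_le (hgen : Subgroup.closure (S : Set G) = ⊤) (n : ℕ) :
    {g : G | (cayley S).dist 1 g ≤ n}.Finite := by
  classical
  refine ((Set.finite_Iic n).biUnion fun k _ => ((S ∪ S⁻¹) ^ k).finite_toSet).subset
    fun g hg => ?_
  obtain ⟨p, hp⟩ := (cayley_reachable_one hgen g).exists_walk_length_eq_dist
  exact Set.mem_biUnion (x := p.length) (by simpa [hp] using hg)
    (Finset.mem_coe.mpr (by simpa using cayley_walk_mem_pow p))

end Cayley

/-- Proposition 1.1: a finitely generated group admits a proper affine isometric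
action on `δ₁ + ∂(ℓ¹(𝒢¹))`, given by the cocycle `g ↦ δ₁ - δ_g`; here `N` is the
quotient (image) norm of `‖·‖₁` under the boundary map of the Cayley graph: the
linear action is isometric, the cocycle identity holds, the norm of the cocycle
at `g` is `d(1,g)`, and the cocycle is proper. -/
theorem stmt3 {G : Type*} [Group G] (S : Finset G)
    (hgen : Subgroup.closure (S : Set G) = ⊤)
    (N : (G →₀ ℝ) → ℝ)
    (hN : ∀ f : G →₀ ℝ, N f =
      sInf {r : ℝ | ∃ c : (G × G) →₀ ℝ, (∀ e ∈ c.support, (cayley S).Adj e.1 e.2) ∧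
        bndFull c = f ∧ r = c.sum fun _ a => |a|}) :
    (∀ (g : G) (f : G →₀ ℝ), N (Finsupp.mapDomain (fun x => g * x) f) = N f) ∧
    (∀ g h : G,
      (Finsupp.single (1 : G) (1 : ℝ) - Finsupp.single (g * h) 1) =
        (Finsupp.single (1 : G) (1 : ℝ) - Finsupp.single g 1) +
          Finsupp.mapDomain (fun x => g * x)
            (Finsupp.single (1 : G) (1 : ℝ) - Finsupp.single h 1)) ∧
    (∀ g : G, N (Finsupp.single (1 : G) (1 : ℝ) - Finsupp.single g 1) =
      (cayley S).dist 1 g) ∧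
    (∀ M : ℝ,
      {g : G | N (Finsupp.single (1 : G) (1 : ℝ) - Finsupp.single g 1) ≤ M}.Finite) := by
  have hN' : ∀ f, N f = sInf ((cayley S).fillingLengths f) := hN
  have hnorm : ∀ g : G, N (single 1 1 - single g 1) = (cayley S).dist 1 g := fun g => by
    rw [hN']
    exact (cayley_reachable_one hgen g).sInf_fillingLengths
  refine ⟨fun g f => ?_, fun g h => ?_, hnorm, fun M => ?_⟩
  · rw [hN', hN']
    exact congrArg sInf (fillingLengths_mapDomain (cayleyMulLeft g) f)
  · rw [mapDomain_sub, mapDomain_single, mapDomain_single, mul_one]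
    abel
  · exact (finite_setOf_cayley_dist_le hgen ⌊M⌋₊).subset fun g hg =>
      Nat.le_floor (hnorm g ▸ hg)
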